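/- Size explosion in the Explicit FBC: for every inert A without explicit substitutions and every n ≥ 1, the term tₙ A reduces by the sequence (↦m ↦e ↦e)ⁿ to a term of the form L⟨A^{2ⁿ}⟩ for some substitution context L. -/
import Mathlib


/-- Terms with explicit substitutions (ES): t ::= x | a | λx.t | t u | t[x←u]. -/
inductive ETerm : Type
  | var : ℕ → ETerm
  | sym : ℕ → ETerm
  | lam : ℕ → ETerm → ETerm
  | app : ETerm → ETerm → ETerm
  | esub : ETerm → ℕ → ETerm → ETerm

/-- Free variables (symbols do not count; both λx and [x←·] bind x). -/
def ETerm.fv : ETerm → Finset ℕ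
  | .var x => {x}
  | .sym _ => ∅
  | .lam x t => ETerm.fv t \ {x}
  | .app t u => ETerm.fv t ∪ ETerm.fv u
  | .esub t x u => (ETerm.fv t \ {x}) ∪ ETerm.fv u

/-- A term is closed when it has no free variables. -/
def ETerm.Closed (t : ETerm) : Prop := ETerm.fv t = ∅

/-- Capture-avoiding substitution t{x:=u} (under the convention that bound
variables are renamed apart). -/
def ETerm.subst (x : ℕ) (u : ETerm) : ETerm → ETerm
  | .var y => if y = x then u else .var y
  | .sym a => .sym a
  | .lam y t => if y = x then .lam y t else .lam y (ETerm.subst x u t)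
  | .app t s => .app (ETerm.subst x u t) (ETerm.subst x u s)
  | .esub t y s => if y = x then .esub t y (ETerm.subst x u s)
                   else .esub (ETerm.subst x u t) y (ETerm.subst x u s)

/-- Terms without explicit substitutions. -/
def ETerm.NoES : ETerm → Prop
  | .var _ => True
  | .sym _ => True
  | .lam _ t => ETerm.NoES t
  | .app t u => ETerm.NoES t ∧ ETerm.NoES u
  | .esub _ _ _ => False

/-- Substitution contexts L ::= ⟨·⟩ | L[x←t]. -/
inductive SCtx : Type
  | hole : SCtx
  | sub : SCtx → ℕ → ETerm → SCtx

/-- Plugging a term in a substitution context. -/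
def SCtx.plug : SCtx → ETerm → ETerm
  | .hole, t => t
  | .sub L x u, t => ETerm.esub (SCtx.plug L t) x u

mutual
  /-- Inerts of the Explicit FBC: A ::= a | L⟨A⟩ L'⟨f⟩. -/
  inductive EInert : ETerm → Prop
    | sym : ∀ a : ℕ, EInert (ETerm.sym a)
    | app : ∀ (L L' : SCtx) (A f : ETerm), EInert A → EFireball f →
        EInert (ETerm.app (SCtx.plug L A) (SCtx.plug L' f))
  /-- Fireballs of the Explicit FBC: f ::= v | A, values v ::= λx.t. -/
  inductive EFireball : ETerm → Prop
    | val : ∀ (x : ℕ) (t : ETerm), EFireball (ETerm.lam x t)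
    | inert : ∀ t : ETerm, EInert t → EFireball t
end

/-- Contexts of shape F ::= ⟨·⟩ | t F | F t | F[x←t]. -/
inductive FCtx : Type
  | hole : FCtx
  | appR : ETerm → FCtx → FCtx
  | appL : FCtx → ETerm → FCtx
  | sub : FCtx → ℕ → ETerm → FCtx

/-- Plugging in an F-context. -/
def FCtx.plug : FCtx → ETerm → ETerm
  | .hole, t => t
  | .appR u F, t => ETerm.app u (FCtx.plug F t)
  | .appL F u, t => ETerm.app (FCtx.plug F t) u
  | .sub F x u, t => ETerm.esub (FCtx.plug F t) x u

/-- Evaluation contexts F ::= ⟨·⟩ | t F | F L⟨f⟩ | F[x←t]. -/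
inductive FCtx.Eval : FCtx → Prop
  | hole : FCtx.Eval FCtx.hole
  | appR : ∀ (t : ETerm) (F : FCtx), FCtx.Eval F → FCtx.Eval (FCtx.appR t F)
  | appL : ∀ (F : FCtx) (L : SCtx) (f : ETerm), FCtx.Eval F → EFireball f →
      FCtx.Eval (FCtx.appL F (SCtx.plug L f))
  | sub : ∀ (F : FCtx) (x : ℕ) (t : ETerm), FCtx.Eval F → FCtx.Eval (FCtx.sub F x t)

/-- Multiplicative rule ↦m: F⟨L⟨λx.t⟩ L'⟨f⟩⟩ ↦m F⟨L⟨t[x←L'⟨f⟩]⟩⟩. -/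
inductive StepM : ETerm → ETerm → Prop
  | fire : ∀ (F : FCtx) (L L' : SCtx) (x : ℕ) (t f : ETerm),
      FCtx.Eval F → EFireball f →
      StepM (FCtx.plug F (ETerm.app (SCtx.plug L (ETerm.lam x t)) (SCtx.plug L' f)))
            (FCtx.plug F (SCtx.plug L (ETerm.esub t x (SCtx.plug L' f))))

/-- Exponential rule ↦e: F⟨F'⟨x⟩[x←L⟨f⟩]⟩ ↦e F⟨L⟨F'⟨f⟩[x←f]⟩⟩. -/
inductive StepE : ETerm → ETerm → Prop
  | fire : ∀ (F F' : FCtx) (L : SCtx) (x : ℕ) (f : ETerm),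
      FCtx.Eval F → FCtx.Eval F' → EFireball f →
      StepE (FCtx.plug F (ETerm.esub (FCtx.plug F' (ETerm.var x)) x (SCtx.plug L f)))
            (FCtx.plug F (SCtx.plug L (ETerm.esub (FCtx.plug F' f) x f)))

/-- ↦f := ↦m ∪ ↦e. -/
def StepF (t u : ETerm) : Prop := StepM t u ∨ StepE t u

/-- The family tₙ on ES-terms: `tFamE n` is t_{n+1}, i.e. tFamE 0 = t₁ = λx₁.(x₁ x₁)
and tFamE (n+1) = λx_{n+2}.(t_{n+1} (x_{n+2} x_{n+2})). -/
def tFamE : ℕ → ETerm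
  | 0 => ETerm.lam 0 (ETerm.app (ETerm.var 0) (ETerm.var 0))
  | n+1 => ETerm.lam (n+1)
      (ETerm.app (tFamE n) (ETerm.app (ETerm.var (n+1)) (ETerm.var (n+1))))

/-- `pow2E n s` is s^{2ⁿ}. -/
def pow2E : ℕ → ETerm → ETerm
  | 0, s => s
  | n+1, s => ETerm.app (pow2E n s) (pow2E n s)

/-- One ↦m step followed by two ↦e steps. -/
def StepMEE (t u : ETerm) : Prop := ∃ a b, StepM t a ∧ StepE a b ∧ StepE b u

/-- n iterations of a relation. -/
def IterE (R : ETerm → ETerm → Prop) : ℕ → ETerm → ETerm → Prop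
  | 0, t, u => t = u
  | n+1, t, u => ∃ w, R t w ∧ IterE R n w u

def FCtx.comp : FCtx → FCtx → FCtx
  | .hole, F => F
  | .appR t G, F => .appR t (G.comp F)
  | .appL G u, F => .appL (G.comp F) u
  | .sub G x u, F => .sub (G.comp F) x u

theorem FCtx.plug_comp (G F : FCtx) (t : ETerm) :
    (G.comp F).plug t = G.plug (F.plug t) := by
  induction G <;> simp [FCtx.comp, FCtx.plug, *]

theorem FCtx.Eval.comp : ∀ {G : FCtx}, G.Eval → ∀ {F : FCtx}, F.Eval → (G.comp F).Eval := by
  intro G hG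
  induction hG with
  | hole => intro F hF; exact hF
  | appR t G _ ih => intro F hF; exact FCtx.Eval.appR t _ (ih hF)
  | appL G L f _ hf ih => intro F hF; exact FCtx.Eval.appL _ L f (ih hF) hf
  | sub G x t _ ih => intro F hF; exact FCtx.Eval.sub _ x t (ih hF)

theorem StepM.ctx {t u : ETerm} (h : StepM t u) {G : FCtx} (hG : G.Eval) :
    StepM (G.plug t) (G.plug u) := by
  cases h with
  | fire F L L' x s f hF hf =>
    rw [← FCtx.plug_comp, ← FCtx.plug_comp]
    exact StepM.fire _ L L' x s f (hG.comp hF) hf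

theorem StepE.ctx {t u : ETerm} (h : StepE t u) {G : FCtx} (hG : G.Eval) :
    StepE (G.plug t) (G.plug u) := by
  cases h with
  | fire F F' L x f hF hF' hf =>
    rw [← FCtx.plug_comp, ← FCtx.plug_comp]
    exact StepE.fire _ F' L x f (hG.comp hF) hF' hf

theorem StepMEE.ctx {t u : ETerm} (h : StepMEE t u) {G : FCtx} (hG : G.Eval) :
    StepMEE (G.plug t) (G.plug u) := by
  obtain ⟨a, b, hm, h1, h2⟩ := h
  exact ⟨G.plug a, G.plug b, hm.ctx hG, h1.ctx hG, h2.ctx hG⟩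

theorem IterE.ctx {n : ℕ} {t u : ETerm} (h : IterE StepMEE n t u) {G : FCtx}
    (hG : G.Eval) : IterE StepMEE n (G.plug t) (G.plug u) := by
  induction n generalizing t with
  | zero =>
    have h' : t = u := h
    show G.plug t = G.plug u
    rw [h']
  | succ n ih =>
    obtain ⟨w, hw, h⟩ := h
    exact ⟨G.plug w, hw.ctx hG, ih h⟩

theorem pow2E_app (n : ℕ) (s : ETerm) : pow2E n (ETerm.app s s) = pow2E (n+1) s := by
  induction n with
  | zero => rfl
  | succ n ih => show ETerm.app _ _ = ETerm.app _ _; rw [ih]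

theorem size_explosion_aux (n : ℕ) : ∀ A : ETerm, EInert A →
    ∃ L : SCtx, IterE StepMEE (n+1) (ETerm.app (tFamE n) A)
      (SCtx.plug L (pow2E (n+1) A)) := by
  induction n with
  | zero =>
    intro A hA
    refine ⟨SCtx.sub SCtx.hole 0 A,
      ETerm.esub (ETerm.app A A) 0 A,
      ⟨ETerm.esub (ETerm.app (ETerm.var 0) (ETerm.var 0)) 0 A,
       ETerm.esub (ETerm.app (ETerm.var 0) A) 0 A, ?_, ?_, ?_⟩, rfl⟩
    · exact StepM.fire FCtx.hole SCtx.hole SCtx.hole 0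
        (ETerm.app (ETerm.var 0) (ETerm.var 0)) A FCtx.Eval.hole (EFireball.inert A hA)
    · exact StepE.fire FCtx.hole (FCtx.appR (ETerm.var 0) FCtx.hole) SCtx.hole 0 A
        FCtx.Eval.hole (FCtx.Eval.appR _ _ FCtx.Eval.hole) (EFireball.inert A hA)
    · exact StepE.fire FCtx.hole (FCtx.appL FCtx.hole A) SCtx.hole 0 A
        FCtx.Eval.hole (FCtx.Eval.appL FCtx.hole SCtx.hole A FCtx.Eval.hole (EFireball.inert A hA))
        (EFireball.inert A hA)
  | succ n ih =>
    intro A hA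
    have hA2 : EInert (ETerm.app A A) :=
      EInert.app SCtx.hole SCtx.hole A A hA (EFireball.inert A hA)
    obtain ⟨L, hL⟩ := ih (ETerm.app A A) hA2
    refine ⟨SCtx.sub L (n+1) A,
      ETerm.esub (ETerm.app (tFamE n) (ETerm.app A A)) (n+1) A,
      ⟨ETerm.esub (ETerm.app (tFamE n) (ETerm.app (ETerm.var (n+1)) (ETerm.var (n+1)))) (n+1) A,
       ETerm.esub (ETerm.app (tFamE n) (ETerm.app (ETerm.var (n+1)) A)) (n+1) A, ?_, ?_, ?_⟩, ?_⟩
    · exact StepM.fire FCtx.hole SCtx.hole SCtx.hole (n+1)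
        (ETerm.app (tFamE n) (ETerm.app (ETerm.var (n+1)) (ETerm.var (n+1)))) A
        FCtx.Eval.hole (EFireball.inert A hA)
    · exact StepE.fire FCtx.hole
        (FCtx.appR (tFamE n) (FCtx.appR (ETerm.var (n+1)) FCtx.hole)) SCtx.hole (n+1) A
        FCtx.Eval.hole (FCtx.Eval.appR _ _ (FCtx.Eval.appR _ _ FCtx.Eval.hole))
        (EFireball.inert A hA)
    · exact StepE.fire FCtx.hole
        (FCtx.appR (tFamE n) (FCtx.appL FCtx.hole A)) SCtx.hole (n+1) A
        FCtx.Eval.hole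
        (FCtx.Eval.appR _ _ (FCtx.Eval.appL FCtx.hole SCtx.hole A FCtx.Eval.hole (EFireball.inert A hA)))
        (EFireball.inert A hA)
    · have h := hL.ctx (G := FCtx.sub FCtx.hole (n+1) A)
        (FCtx.Eval.sub _ _ _ FCtx.Eval.hole)
      rw [pow2E_app] at h
      exact h

/-- size explosion in the Explicit FBC: for every inert A without
explicit substitutions and every n ≥ 1, tₙ A (↦m ↦e ↦e)ⁿ L⟨A^{2ⁿ}⟩ for some
substitution context L (here with index shift: t_{n+1} A reduces by n+1 blocks
↦m↦e↦e to some L⟨A^{2^{n+1}}⟩). -/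
theorem size_explosion_explicit (A : ETerm) (hA : EInert A) (hno : ETerm.NoES A)
    (n : ℕ) :
    ∃ L : SCtx, IterE StepMEE (n+1) (ETerm.app (tFamE n) A)
      (SCtx.plug L (pow2E (n+1) A)) := by
  exact size_explosion_aux n A hA
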